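/- Second-order equation for the velocity (eq:DVinside): let V : ℝ⁴ → ℝ⁴ be a smooth irrotational vector field, i.e. ∂_μ V_ν = ∂_ν V_μ on ℝ⁴ for all μ, ν, and set s := −V_μ V^μ. Then for every ν ∈ {0,1,2,3}, at every point of ℝ⁴ one has D_V² V^ν − (1/2)(∂_μ s)(∂^μ V^ν) = −(1/2) ∂^ν (D_V s), with repeated Greek indices summed over {0,1,2,3} and raised/lowered with the Minkowski metric. -/

import Mathlib

open scoped BigOperators

noncomputable section

/-- Partial derivative `∂_μ` of a real-valued function on `ℝ⁴`. -/
def pd (μ : Fin 4) (f : (Fin 4 → ℝ) → ℝ) : (Fin 4 → ℝ) → ℝ :=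
  fun x => fderiv ℝ f x (Pi.single μ 1)

/-- Minkowski metric signs: `msign 0 = −1`, `msign i = 1` for `i = 1,2,3`. -/
def msign (μ : Fin 4) : ℝ := if μ = 0 then -1 else 1

/-- Derivative along the vector field `V` : `D_V f = V^μ ∂_μ f`. -/
def DV (V : (Fin 4 → ℝ) → Fin 4 → ℝ) (f : (Fin 4 → ℝ) → ℝ) : (Fin 4 → ℝ) → ℝ :=
  fun x => ∑ μ : Fin 4, V x μ * pd μ f x

/-- The d'Alembertian `□f = −∂₀²f + Σᵢ ∂ᵢ²f = m^{μν} ∂_μ∂_ν f`. -/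
def dAl (f : (Fin 4 → ℝ) → ℝ) : (Fin 4 → ℝ) → ℝ :=
  fun x => ∑ μ : Fin 4, msign μ * pd μ (pd μ f) x

lemma pd_smooth {f : (Fin 4 → ℝ) → ℝ} (hf : ContDiff ℝ (⊤ : ℕ∞) f) (μ : Fin 4) :
    ContDiff ℝ (⊤ : ℕ∞) (pd μ f) :=
  (hf.fderiv_right (by simp)).clm_apply contDiff_const

lemma pd_neg (f : (Fin 4 → ℝ) → ℝ) (μ : Fin 4) (x : Fin 4 → ℝ) :
    pd μ (fun y => -f y) x = -pd μ f x := by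
  simp [pd, fderiv_neg]

lemma pd_sum {ι : Type*} (A : Finset ι) (f : ι → (Fin 4 → ℝ) → ℝ) (μ : Fin 4) (x : Fin 4 → ℝ)
    (hf : ∀ i ∈ A, DifferentiableAt ℝ (f i) x) :
    pd μ (fun y => ∑ i ∈ A, f i y) x = ∑ i ∈ A, pd μ (f i) x := by
  simp [pd, fderiv_fun_sum hf]

lemma pd_mul {f g : (Fin 4 → ℝ) → ℝ} {x : Fin 4 → ℝ} (hf : DifferentiableAt ℝ f x)
    (hg : DifferentiableAt ℝ g x) (μ : Fin 4) :
    pd μ (fun y => f y * g y) x = pd μ f x * g x + f x * pd μ g x := by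
  simp [pd, fderiv_fun_mul hf hg]; ring

lemma pd_const_mul {f : (Fin 4 → ℝ) → ℝ} {x : Fin 4 → ℝ} (hf : DifferentiableAt ℝ f x)
    (c : ℝ) (μ : Fin 4) :
    pd μ (fun y => c * f y) x = c * pd μ f x := by
  simp [pd, fderiv_const_mul hf c]

lemma pd_comm {f : (Fin 4 → ℝ) → ℝ} (hf : ContDiff ℝ (⊤ : ℕ∞) f) (μ ν : Fin 4) (x : Fin 4 → ℝ) :
    pd μ (pd ν f) x = pd ν (pd μ f) x := by
  have hd : ContDiff ℝ (⊤ : ℕ∞) (fderiv ℝ f) := hf.fderiv_right (by simp)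
  have hkey : ∀ (a b : Fin 4),
      pd a (pd b f) x = fderiv ℝ (fderiv ℝ f) x (Pi.single a 1) (Pi.single b 1) := by
    intro a b
    have : pd b f = fun y => fderiv ℝ f y (Pi.single b 1) := rfl
    rw [pd, this, fderiv_clm_apply (hd.differentiable (by simp) x)
      (differentiableAt_const _)]
    simp
  rw [hkey, hkey]
  exact (hf.contDiffAt.isSymmSndFDerivAt (by rw [minSmoothness_of_isRCLikeNormedField]; exact WithTop.coe_le_coe.mpr le_top)).eq _ _

lemma msign_sq (i : Fin 4) : msign i * msign i = 1 := by
  unfold msign; split <;> norm_num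

/-- Second-order equation for the velocity (eq:DVinside): for irrotational `V`
with `s := −V_μV^μ`, `D_V²V^ν − ½(∂_μs)(∂^μV^ν) = −½ ∂^ν(D_Vs)`. -/
theorem second_order_velocity_equation
    (V : (Fin 4 → ℝ) → Fin 4 → ℝ) (hV : ContDiff ℝ (⊤ : ℕ∞) V)
    (s : (Fin 4 → ℝ) → ℝ)
    (hs : s = fun y => -∑ μ : Fin 4, msign μ * V y μ * V y μ)
    (hirr : ∀ (μ ν : Fin 4) (x : Fin 4 → ℝ),
      pd μ (fun y => msign ν * V y ν) x = pd ν (fun y => msign μ * V y μ) x)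
    (ν : Fin 4) (x : Fin 4 → ℝ) :
    DV V (DV V (fun y => V y ν)) x
      - (1 / 2) * ∑ μ : Fin 4, pd μ s x * (msign μ * pd μ (fun y => V y ν) x)
      = -(1 / 2) * (msign ν * pd ν (DV V s) x) := by
  classical
  have hW : ∀ i : Fin 4, ContDiff ℝ (⊤ : ℕ∞) (fun y => V y i) := fun i =>
    (ContinuousLinearMap.proj i : ((Fin 4) → ℝ) →L[ℝ] ℝ).contDiff.comp hV
  have hWd : ∀ (i : Fin 4) (y : Fin 4 → ℝ), DifferentiableAt ℝ (fun z => V z i) y :=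
    fun i y => (hW i).differentiable (by simp) y
  have hPd : ∀ (μ i : Fin 4) (y : Fin 4 → ℝ),
      DifferentiableAt ℝ (pd μ (fun z => V z i)) y :=
    fun μ i y => (pd_smooth (hW i) μ).differentiable (by simp) y
  -- irrotationality in usable pointwise form
  have irr : ∀ (μ i : Fin 4) (y : Fin 4 → ℝ),
      msign i * pd μ (fun z => V z i) y = msign μ * pd i (fun z => V z μ) y := by
    intro μ i y
    have h := hirr μ i y
    rwa [pd_const_mul (hWd i y) (msign i) μ, pd_const_mul (hWd μ y) (msign μ) i] at h
  -- symmetric second derivative identity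
  have claim2 : ∀ (μ lam : Fin 4) (y : Fin 4 → ℝ),
      msign ν * msign lam * pd ν (pd μ (fun z => V z lam)) y
        = pd μ (pd lam (fun z => V z ν)) y := by
    intro μ lam y
    have h1 : pd ν (pd μ (fun z => V z lam)) y = pd μ (pd ν (fun z => V z lam)) y :=
      pd_comm (hW lam) ν μ y
    have h2 : pd μ (fun z => msign lam * pd ν (fun w => V w lam) z) y
        = msign lam * pd μ (pd ν (fun z => V z lam)) y :=
      pd_const_mul (hPd ν lam y) (msign lam) μ
    have h3 : (fun z => msign lam * pd ν (fun w => V w lam) z)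
        = (fun z => msign ν * pd lam (fun w => V w ν) z) := funext (fun z => irr ν lam z)
    have h4 : pd μ (fun z => msign ν * pd lam (fun w => V w ν) z) y
        = msign ν * pd μ (pd lam (fun z => V z ν)) y :=
      pd_const_mul (hPd lam ν y) (msign ν) μ
    have h5 : msign lam * pd μ (pd ν (fun z => V z lam)) y
        = msign ν * pd μ (pd lam (fun z => V z ν)) y := by
      rw [← h2, h3, h4]
    rw [h1]
    linear_combination msign ν * h5 + pd μ (pd lam (fun z => V z ν)) y * msign_sq ν
  -- first derivative of s
  have hpds : ∀ (μ : Fin 4) (y : Fin 4 → ℝ),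
      pd μ s y = ∑ lam : Fin 4, (-2 * msign lam) * (V y lam * pd μ (fun z => V z lam) y) := by
    intro μ y
    rw [hs, pd_neg, pd_sum Finset.univ (fun lam z => msign lam * V z lam * V z lam) μ y
      (fun i _ => ((hWd i y).const_mul (msign i)).mul (hWd i y))]
    rw [← Finset.sum_neg_distrib]
    refine Finset.sum_congr rfl (fun lam _ => ?_)
    rw [pd_mul ((hWd lam y).const_mul (msign lam)) (hWd lam y) μ,
      pd_const_mul (hWd lam y) (msign lam) μ]
    ring
  -- DV V s as explicit function
  have hDVs : DV V s = fun y => ∑ μ : Fin 4,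
      V y μ * ∑ lam : Fin 4, (-2 * msign lam) * (V y lam * pd μ (fun z => V z lam) y) := by
    funext y
    refine Finset.sum_congr rfl (fun μ _ => ?_)
    rw [hpds μ y]
  -- expansion of the second-order term
  have hA : DV V (DV V (fun y => V y ν)) x
      = ∑ μ : Fin 4, V x μ * ∑ lam : Fin 4,
          (pd μ (fun z => V z lam) x * pd lam (fun z => V z ν) x
            + V x lam * pd μ (pd lam (fun z => V z ν)) x) := by
    refine Finset.sum_congr rfl (fun μ _ => ?_)
    congr 1
    have hrepr : DV V (fun y => V y ν)
        = fun y => ∑ lam : Fin 4, V y lam * pd lam (fun z => V z ν) y := rfl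
    rw [hrepr, pd_sum Finset.univ
      (fun lam y => V y lam * pd lam (fun z => V z ν) y) μ x
      (fun i _ => (hWd i x).mul (hPd i ν x))]
    refine Finset.sum_congr rfl (fun lam _ => ?_)
    rw [pd_mul (hWd lam x) (hPd lam ν x) μ]
  -- expansion of the mixed term
  have hB : ∑ μ : Fin 4, pd μ s x * (msign μ * pd μ (fun y => V y ν) x)
      = ∑ μ : Fin 4, ∑ lam : Fin 4,
          ((-2 * msign lam) * (V x lam * pd μ (fun z => V z lam) x))
            * (msign μ * pd μ (fun z => V z ν) x) := by
    refine Finset.sum_congr rfl (fun μ _ => ?_)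
    rw [hpds μ x, Finset.sum_mul]
  -- expansion of the right-hand side
  have hGd : ∀ (μ : Fin 4) (y : Fin 4 → ℝ), DifferentiableAt ℝ
      (fun z => ∑ lam : Fin 4, (-2 * msign lam) * (V z lam * pd μ (fun w => V w lam) z)) y := by
    intro μ y
    exact DifferentiableAt.fun_sum (fun i _ => ((hWd i y).mul (hPd μ i y)).const_mul _)
  have hC : pd ν (DV V s) x
      = ∑ μ : Fin 4,
          (pd ν (fun z => V z μ) x
              * ∑ lam : Fin 4, (-2 * msign lam) * (V x lam * pd μ (fun z => V z lam) x)
            + V x μ * ∑ lam : Fin 4, (-2 * msign lam)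
                * (pd ν (fun z => V z lam) x * pd μ (fun z => V z lam) x
                  + V x lam * pd ν (pd μ (fun z => V z lam)) x)) := by
    rw [hDVs, pd_sum Finset.univ
      (fun μ y => V y μ * ∑ lam : Fin 4, (-2 * msign lam) * (V y lam * pd μ (fun z => V z lam) y))
      ν x (fun μ _ => (hWd μ x).mul (hGd μ x))]
    refine Finset.sum_congr rfl (fun μ _ => ?_)
    have hinner : pd ν
        (fun z => ∑ lam : Fin 4, (-2 * msign lam) * (V z lam * pd μ (fun w => V w lam) z)) x
        = ∑ lam : Fin 4, (-2 * msign lam)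
            * (pd ν (fun z => V z lam) x * pd μ (fun z => V z lam) x
              + V x lam * pd ν (pd μ (fun z => V z lam)) x) := by
      rw [pd_sum Finset.univ
        (fun lam y => (-2 * msign lam) * (V y lam * pd μ (fun z => V z lam) y)) ν x
        (fun i _ => ((hWd i x).mul (hPd μ i x)).const_mul _)]
      refine Finset.sum_congr rfl (fun lam _ => ?_)
      rw [pd_const_mul (f := fun y => V y lam * pd μ (fun z => V z lam) y) ((hWd lam x).mul (hPd μ lam x)) (-2 * msign lam) ν,
        pd_mul (hWd lam x) (hPd μ lam x) ν]
    rw [pd_mul (hWd μ x) (hGd μ x) ν, hinner]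
  -- put everything together
  rw [hA, hB, hC]
  simp only [Finset.mul_sum, mul_add, ← Finset.sum_add_distrib, ← Finset.sum_sub_distrib,
    neg_mul, ← Finset.sum_neg_distrib]
  refine Finset.sum_congr rfl (fun μ _ => ?_)
  refine Finset.sum_congr rfl (fun lam _ => ?_)
  have e1 := irr ν μ x
  have e2 := irr ν lam x
  have e3 := claim2 μ lam x
  have m1 := msign_sq ν
  have m2 := msign_sq μ
  have m3 := msign_sq lam
  linear_combination
    (-(V x μ * pd μ (fun z => V z lam) x) * msign ν) * e2
      + (-(V x μ * pd μ (fun z => V z lam) x) * pd lam (fun z => V z ν) x) * m1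
      + (-(V x μ * V x lam)) * e3
      + (-(msign lam * V x lam * pd μ (fun z => V z lam) x) * msign μ * msign ν) * e1
      + ((msign lam * V x lam * pd μ (fun z => V z lam) x) * msign ν * pd ν (fun z => V z μ) x) * m2
      + (-(msign lam * V x lam * pd μ (fun z => V z lam) x) * msign μ * pd μ (fun z => V z ν) x) * m1
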